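/- arXiv:1811.04297 — 2 statements merged into one kernel-verified Lean document; each statement's English description precedes it below -/
import Mathlib

section
/- Let (A, X, h, (E_d)) be a sieve setup. Then for every positive integer r, Σ_{a ∈ A} f_r(a) = H(r)·X + Σ_{s | r} μ²(s)·J(r, s)·E_s, where the second sum is over the positive divisors s of r and μ is the Möbius function (so only squarefree s contribute). -/
/-! With `α` the exponent of `p` in `r`, `u_p = (1 − h(p)/p)^α` and `v_p = (−h(p)/p)^α`, each
local factor of `f_r(a)` is `1_{p ∣ a}·(u_p − v_p) + v_p`; expanding the product over `p ∣ r`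
writes `f_r(a)` as `∑_{s ∣ rad r} J(r, s)·1_{s ∣ a}`. Summing over `A` turns `1_{s ∣ a}` into
`#A_s = (h(s)/s)·X + E_s`, and the same expansion with `h(p)/p` in place of `1_{p ∣ a}`
identifies the main term `∑_s J(r, s)·h(s)/s` with `H(r)`. -/

open MeasureTheory Filter
open scoped Classical

noncomputable section

/-- A function `g : ℕ → ℝ` is strongly additive if `g (m * n) = g m + g n` whenever
`m` and `n` are coprime, and `g (p ^ α) = g p` for every prime `p` and `α ≥ 1`. -/
def StronglyAdditive (g : ℕ → ℝ) : Prop :=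
  (∀ m n : ℕ, 0 < m → 0 < n → Nat.Coprime m n → g (m * n) = g m + g n) ∧
  ∀ p α : ℕ, p.Prime → 1 ≤ α → g (p ^ α) = g p

/-- A sieve setup: a finite multiset `A` of positive integers, an approximation `X > 0`
to `#A`, a multiplicative function `h` with `0 ≤ h(d) ≤ d`, and remainder terms `E d`
defined by `#A_d = (h(d)/d)·X + E_d`, where `A_d` is the sub-multiset of multiples of `d`. -/
structure SieveSetup where
  A : Multiset ℕ
  X : ℝ
  h : ℕ → ℝ
  E : ℕ → ℝ
  mem_pos : ∀ a ∈ A, 0 < a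
  X_pos : 0 < X
  h_one : h 1 = 1
  h_mult : ∀ m n : ℕ, Nat.Coprime m n → h (m * n) = h m * h n
  h_nonneg : ∀ d : ℕ, 0 < d → 0 ≤ h d
  h_le : ∀ d : ℕ, 0 < d → h d ≤ (d : ℝ)
  count_eq : ∀ d : ℕ, 0 < d →
    ((A.filter (fun a => d ∣ a)).card : ℝ) = h d / d * X + E d

/-- `μ^P(g) = ∑_{p ∈ P} g(p) h(p)/p`. -/
def muP (h : ℕ → ℝ) (P : Finset ℕ) (g : ℕ → ℝ) : ℝ := ∑ p ∈ P, g p * (h p / p)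

/-- `μ^P(1) = ∑_{p ∈ P} h(p)/p`. -/
def muP1 (h : ℕ → ℝ) (P : Finset ℕ) : ℝ := ∑ p ∈ P, h p / p

/-- `κ^P(g₁, g₂) = ∑_{p ∈ P} g₁(p) g₂(p) (h(p)/p)(1 − h(p)/p)`. -/
def kappaP (h : ℕ → ℝ) (P : Finset ℕ) (g₁ g₂ : ℕ → ℝ) : ℝ :=
  ∑ p ∈ P, g₁ p * g₂ p * (h p / p) * (1 - h p / p)

/-- `g^P(a) = ∑_{p ∈ P, p ∣ a} g(p)`. -/
def gP (P : Finset ℕ) (g : ℕ → ℝ) (a : ℕ) : ℝ := ∑ p ∈ P.filter (· ∣ a), g p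

/-- `f_r(a)`: the completely multiplicative function of `r` with
`f_p(a) = 1 − h(p)/p` if `p ∣ a` and `f_p(a) = −h(p)/p` if `p ∤ a`. -/
def ffun (h : ℕ → ℝ) (r a : ℕ) : ℝ :=
  r.factorization.prod fun p α => (if p ∣ a then 1 - h p / p else -(h p / p)) ^ α

/-- `F_g^P(a) = ∑_{p ∈ P} g(p) f_p(a)`. -/
def FP (h : ℕ → ℝ) (P : Finset ℕ) (g : ℕ → ℝ) (a : ℕ) : ℝ := ∑ p ∈ P, g p * ffun h p a

/-- `D_k(P)`: the squarefree integers (including 1) that are products of at most `k`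
distinct primes of `P`. -/
def Dk (P : Finset ℕ) (k : ℕ) : Finset ℕ :=
  (P.powerset.filter fun S => S.card ≤ k).image fun S => ∏ p ∈ S, p

/-- The multiplicative function `H` with
`H(p^α) = (h(p)/p)(1 − h(p)/p)^α + (−h(p)/p)^α (1 − h(p)/p)`. -/
def Hfun (h : ℕ → ℝ) (n : ℕ) : ℝ :=
  n.factorization.prod fun p α =>
    h p / p * (1 - h p / p) ^ α + (-(h p / p)) ^ α * (1 - h p / p)

/-- The multiplicative function `J(·, s)` with `J(p^α, s) = (1 − h(p)/p)^α − (−h(p)/p)^α`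
if `p ∣ s`, and `J(p^α, s) = (−h(p)/p)^α` if `p ∤ s`. -/
def Jfun (h : ℕ → ℝ) (r s : ℕ) : ℝ :=
  r.factorization.prod fun p α =>
    if p ∣ s then (1 - h p / p) ^ α - (-(h p / p)) ^ α else (-(h p / p)) ^ α

/-- A positive integer is squarefull if `p² ∣ n` for every prime `p ∣ n`. -/
def Squarefull (n : ℕ) : Prop := ∀ p : ℕ, p.Prime → p ∣ n → p ^ 2 ∣ n

/-- `τ : {1,…,k} → {1,…,l}` is 2-to-1 if every fiber has exactly two elements. -/
def TwoToOne {k l : ℕ} (τ : Fin k → Fin l) : Prop :=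
  ∀ j : Fin l, (Finset.univ.filter fun i => τ i = j).card = 2

/-- For a 2-to-1 map `τ` and symmetric `z`, this equals `∏_j z (Υ₁ j) (Υ₂ j)`, where
`Υ₁ j, Υ₂ j` are the two preimages of `j` under `τ`: each factor averages `z` over the
two ordered pairs of distinct elements of the fiber of `j`. -/
def fiberProd {k l : ℕ} (z : Fin k → Fin k → ℝ) (τ : Fin k → Fin l) : ℝ :=
  ∏ j : Fin l, (∑ i ∈ Finset.univ.filter (fun i => τ i = j),
    ∑ i' ∈ Finset.univ.filter (fun i' => τ i' = j ∧ i' ≠ i), z i i') / 2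

/-- `C_m = m! / (2^{m/2} (m/2)!)`, the `m`-th moment of the standard normal distribution
for even `m`. -/
def Cm (m : ℕ) : ℝ := (Nat.factorial m : ℝ) / (2 ^ (m / 2) * (Nat.factorial (m / 2) : ℝ))

/-- `A_Q(P) = Q(μ^P(g₁), …, μ^P(g_ℓ))`. -/
def AQP {ℓ : ℕ} (h : ℕ → ℝ) (P : Finset ℕ) (Q : MvPolynomial (Fin ℓ) ℝ)
    (g : Fin ℓ → ℕ → ℝ) : ℝ :=
  MvPolynomial.eval (fun i => muP h P (g i)) Q

/-- `B_Q(P)² = ∑_{i,j} (∂Q/∂T_i)(μ^P(g)) (∂Q/∂T_j)(μ^P(g)) κ^P(g_i, g_j)`. -/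
def BQP2 {ℓ : ℕ} (h : ℕ → ℝ) (P : Finset ℕ) (Q : MvPolynomial (Fin ℓ) ℝ)
    (g : Fin ℓ → ℕ → ℝ) : ℝ :=
  ∑ i : Fin ℓ, ∑ j : Fin ℓ,
    MvPolynomial.eval (fun i' => muP h P (g i')) (MvPolynomial.pderiv i Q) *
    MvPolynomial.eval (fun i' => muP h P (g i')) (MvPolynomial.pderiv j Q) *
    kappaP h P (g i) (g j)

/-- `B_Q(P)`, the square root of `B_Q(P)²`. -/
def BQP {ℓ : ℕ} (h : ℕ → ℝ) (P : Finset ℕ) (Q : MvPolynomial (Fin ℓ) ℝ)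
    (g : Fin ℓ → ℕ → ℝ) : ℝ :=
  Real.sqrt (BQP2 h P Q g)

/-- The `m`-th moment `M_m = ∑_{a ∈ A} (Q(g₁^P(a), …, g_ℓ^P(a)) − A_Q(P))^m`. -/
def Mm {ℓ : ℕ} (S : SieveSetup) (P : Finset ℕ) (Q : MvPolynomial (Fin ℓ) ℝ)
    (g : Fin ℓ → ℕ → ℝ) (m : ℕ) : ℝ :=
  (S.A.map fun a =>
    (MvPolynomial.eval (fun i => gP P (g i) a) Q - AQP S.h P Q g) ^ m).sum

open Finset

theorem Multiset.sum_map_boole {α R : Type*} [AddCommMonoidWithOne R] (A : Multiset α)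
    (p : α → Prop) [DecidablePred p] :
    (A.map fun a => if p a then (1 : R) else 0).sum = (A.filter p).card := by
  induction A using Multiset.induction with
  | empty => simp
  | cons a A ih => by_cases h : p a <;> simp [h, ih, add_comm]

namespace Nat

theorem prod_primes_dvd_iff {t : Finset ℕ} (ht : ∀ p ∈ t, p.Prime) {a : ℕ} :
    (∏ p ∈ t, p) ∣ a ↔ ∀ p ∈ t, p ∣ a :=
  ⟨fun h _ hp => (dvd_prod_of_mem _ hp).trans h,
    prod_primes_dvd a fun p hp => (ht p hp).prime⟩

theorem prime_dvd_prod_primes_iff {p : ℕ} (hp : p.Prime) {t : Finset ℕ}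
    (ht : ∀ q ∈ t, q.Prime) : p ∣ ∏ q ∈ t, q ↔ p ∈ t := by
  rw [← primeFactors_prod ht, mem_primeFactors_of_ne_zero, primeFactors_prod ht]
  · simp [hp]
  · exact prod_ne_zero_iff.2 fun q hq => (ht q hq).ne_zero

theorem map_prod_primes {M : Type*} [CommMonoid M] {f : ℕ → M} (h_one : f 1 = 1)
    (h_mul : ∀ m n : ℕ, Coprime m n → f (m * n) = f m * f n) {t : Finset ℕ}
    (ht : ∀ p ∈ t, p.Prime) : f (∏ p ∈ t, p) = ∏ p ∈ t, f p := by
  induction t using Finset.induction with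
  | empty => simpa using h_one
  | insert q t hq ih =>
    have ht' : ∀ p ∈ t, p.Prime := fun p hp => ht p (mem_insert_of_mem hp)
    have hcop : Coprime q (∏ p ∈ t, p) := Coprime.prod_right fun p hp =>
      (coprime_primes (ht q (mem_insert_self q t)) (ht' p hp)).2 fun h => hq (h ▸ hp)
    rw [prod_insert hq, prod_insert hq, h_mul _ _ hcop, ih ht']

theorem sum_divisors_moebius_sq_mul {R : Type*} [Ring R] {n : ℕ} (hn : n ≠ 0) (f : ℕ → R) :
    ∑ s ∈ n.divisors, ((ArithmeticFunction.moebius s : ℤ) : R) ^ 2 * f s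
      = ∑ t ∈ n.primeFactors.powerset, f (∏ p ∈ t, p) := by
  have hsq : ∀ s, ((ArithmeticFunction.moebius s : ℤ) : R) ^ 2 = if Squarefree s then 1 else 0 :=
    fun s => by rw [← Int.cast_pow, ArithmeticFunction.moebius_sq]; split_ifs <;> simp
  simp_rw [hsq, ite_mul, one_mul, zero_mul]
  rw [← sum_filter, sum_divisors_filter_squarefree hn, factors_eq, List.toFinset_coe,
    toFinset_factors]
  exact sum_congr rfl fun t _ => by rw [prod_eq_multiset_prod, Multiset.map_id']

end Nat

section Expansion

variable (h : ℕ → ℝ) (r : ℕ)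

theorem Jfun_prod_primes {t : Finset ℕ} (ht : t ⊆ r.primeFactors) :
    Jfun h r (∏ p ∈ t, p)
      = (∏ p ∈ t, ((1 - h p / p) ^ r.factorization p - (-(h p / p)) ^ r.factorization p))
        * ∏ p ∈ r.primeFactors \ t, (-(h p / p)) ^ r.factorization p := by
  have ht_prime : ∀ p ∈ t, p.Prime := fun p hp => Nat.prime_of_mem_primeFactors (ht hp)
  rw [Jfun, Nat.prod_factorization_eq_prod_primeFactors,
    ← prod_filter_mul_prod_filter_not r.primeFactors (· ∈ t), filter_mem_eq_inter,
    inter_eq_right.2 ht, ← sdiff_eq_filter]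
  congr 1 <;> refine prod_congr rfl fun p hp => ?_
  · exact if_pos ((Nat.prime_dvd_prod_primes_iff (ht_prime p hp) ht_prime).2 hp)
  · have hp_prime := Nat.prime_of_mem_primeFactors (mem_sdiff.1 hp).1
    exact if_neg (mt (Nat.prime_dvd_prod_primes_iff hp_prime ht_prime).1 (mem_sdiff.1 hp).2)

theorem prod_primeFactors_mul_add_eq_sum_Jfun (w : ℕ → ℝ) :
    ∏ p ∈ r.primeFactors, (w p * ((1 - h p / p) ^ r.factorization p
        - (-(h p / p)) ^ r.factorization p) + (-(h p / p)) ^ r.factorization p)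
      = ∑ t ∈ r.primeFactors.powerset, (∏ p ∈ t, w p) * Jfun h r (∏ p ∈ t, p) := by
  rw [prod_add]
  refine sum_congr rfl fun t ht => ?_
  rw [Jfun_prod_primes h r (mem_powerset.1 ht), prod_mul_distrib, mul_assoc]

theorem ffun_eq_sum_Jfun (a : ℕ) :
    ffun h r a = ∑ t ∈ r.primeFactors.powerset,
      (if (∏ p ∈ t, p) ∣ a then 1 else 0) * Jfun h r (∏ p ∈ t, p) := by
  have h_local : ∀ p α, (if p ∣ a then 1 - h p / p else -(h p / p)) ^ α
      = (if p ∣ a then 1 else 0) * ((1 - h p / p) ^ α - (-(h p / p)) ^ α)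
        + (-(h p / p)) ^ α := fun p α => by split_ifs <;> ring
  rw [ffun, Nat.prod_factorization_eq_prod_primeFactors]
  simp_rw [h_local]
  rw [prod_primeFactors_mul_add_eq_sum_Jfun]
  refine sum_congr rfl fun t ht => ?_
  simp only [prod_boole, Nat.prod_primes_dvd_iff fun p hp =>
    Nat.prime_of_mem_primeFactors (mem_powerset.1 ht hp)]

theorem Hfun_eq_sum_Jfun (h_one : h 1 = 1)
    (h_mul : ∀ m n : ℕ, Nat.Coprime m n → h (m * n) = h m * h n) :
    Hfun h r = ∑ t ∈ r.primeFactors.powerset,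
      h (∏ p ∈ t, p) / (∏ p ∈ t, p : ℕ) * Jfun h r (∏ p ∈ t, p) := by
  have h_local : ∀ p α, h p / p * (1 - h p / p) ^ α + (-(h p / p)) ^ α * (1 - h p / p)
      = h p / p * ((1 - h p / p) ^ α - (-(h p / p)) ^ α) + (-(h p / p)) ^ α :=
    fun p α => by ring
  rw [Hfun, Nat.prod_factorization_eq_prod_primeFactors]
  simp_rw [h_local]
  rw [prod_primeFactors_mul_add_eq_sum_Jfun]
  refine sum_congr rfl fun t ht => ?_
  have ht_prime : ∀ p ∈ t, p.Prime := fun p hp =>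
    Nat.prime_of_mem_primeFactors (mem_powerset.1 ht hp)
  rw [Nat.map_prod_primes h_one h_mul ht_prime, Nat.cast_prod, prod_div_distrib]

end Expansion

theorem SieveSetup.sum_map_boole_dvd (S : SieveSetup) {d : ℕ} (hd : 0 < d) :
    (S.A.map fun a => if d ∣ a then (1 : ℝ) else 0).sum = S.h d / d * S.X + S.E d := by
  rw [Multiset.sum_map_boole, S.count_eq d hd]

/-- **Lemma 5.4**: `∑_{a ∈ A} f_r(a) = H(r)·X + ∑_{s ∣ r} μ²(s) J(r, s) E_s`. -/
theorem fra_calculation (S : SieveSetup) (r : ℕ) (hr : 0 < r) :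
    (S.A.map fun a => ffun S.h r a).sum
    = Hfun S.h r * S.X +
      ∑ s ∈ r.divisors, (ArithmeticFunction.moebius s : ℝ) ^ 2 * Jfun S.h r s * S.E s := by
  have h_count : ∀ t ∈ r.primeFactors.powerset,
      (S.A.map fun a => (if (∏ p ∈ t, p) ∣ a then 1 else 0) * Jfun S.h r (∏ p ∈ t, p)).sum
        = (S.h (∏ p ∈ t, p) / (∏ p ∈ t, p : ℕ) * S.X + S.E (∏ p ∈ t, p))
          * Jfun S.h r (∏ p ∈ t, p) := fun t ht => by
    rw [Multiset.sum_map_mul_right, S.sum_map_boole_dvd (prod_pos fun p hp =>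
      (Nat.prime_of_mem_primeFactors (mem_powerset.1 ht hp)).pos)]
  rw [Hfun_eq_sum_Jfun S.h r S.h_one S.h_mult, sum_mul]
  simp_rw [mul_assoc _ (Jfun S.h r _), Nat.sum_divisors_moebius_sq_mul hr.ne',
    ← sum_add_distrib, ffun_eq_sum_Jfun, Multiset.sum_map_sum]
  exact sum_congr rfl fun t ht => by rw [h_count t ht]; ring
end
end

section
/- Let k be a positive integer and G > 0. There is a constant C, depending only on k and G, such that the following holds. Let (A, X, h, (E_d)) be a sieve setup, let P be a finite set of primes with μ^P(1) = Σ_{p ∈ P} h(p)/p ≥ 1, and let g₁,…,g_k be strongly additive functions with 0 ≤ g_j(p) ≤ G for all primes p and all 1 ≤ j ≤ k. Then |Σ_{p₁,…,p_k ∈ P} g₁(p₁)···g_k(p_k) · Σ_{s | p₁···p_k} μ²(s)·J(p₁···p_k, s)·E_s| ≤ C·μ^P(1)^k · Σ_{d ∈ D_k(P)} |E_d|, where the inner sum is over the positive divisors s of p₁···p_k and μ is the Möbius function. -/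
open MeasureTheory Filter
open scoped Classical

noncomputable section

/-!
Since `|(1 - x)^α - (-x)^α| ≤ 1` for `0 ≤ x ≤ 1`, we get `|J(p₁⋯p_k, s)| ≤ ∏ᵢ c_s(pᵢ)` with
`c_s(p) = 1` if `p ∣ s` and `c_s(p) = h(p)/p` otherwise. Every squarefree divisor of `p₁⋯p_k` lies
in `D_k(P)`, so after exchanging the two sums each `|E_d|` carries weight at most
`|G|^k (∑_{q ∈ P} c_d(q))^k ≤ |G|^k (k + μ^P(1))^k ≤ |G|^k (k + 1)^k μ^P(1)^k`,
as `d` has at most `k` prime factors.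
-/

open Finset ArithmeticFunction
open scoped ArithmeticFunction.Moebius

def compMulExt (c : ℕ → ℝ) (n : ℕ) : ℝ := n.factorization.prod fun p α => c p ^ α

lemma compMulExt_prod {ι : Type*} (c : ℕ → ℝ) (s : Finset ι) (p : ι → ℕ)
    (hp : ∀ i ∈ s, (p i).Prime) : compMulExt c (∏ i ∈ s, p i) = ∏ i ∈ s, c (p i) := by
  unfold compMulExt
  rw [Nat.factorization_prod fun i hi => (hp i hi).ne_zero,
    ← Finsupp.prod_finsetSum_index (fun _ => pow_zero _) fun _ _ _ => pow_add _ _ _]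
  refine prod_congr rfl fun i hi => ?_
  simp [(hp i hi).factorization, Finsupp.prod_single_index]

lemma abs_one_sub_pow_sub_neg_pow_le_one {x : ℝ} (hx0 : 0 ≤ x) (hx1 : x ≤ 1) (n : ℕ) :
    |(1 - x) ^ n - (-x) ^ n| ≤ 1 := by
  rcases n.eq_zero_or_pos with rfl | hn
  · simp
  calc |(1 - x) ^ n - (-x) ^ n| ≤ |(1 - x) ^ n| + |(-x) ^ n| := abs_sub _ _
    _ = (1 - x) ^ n + x ^ n := by
      rw [abs_pow, abs_pow, abs_neg, abs_of_nonneg hx0, abs_of_nonneg (sub_nonneg.2 hx1)]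
    _ ≤ (1 - x + x) ^ n := pow_add_pow_le (sub_nonneg.2 hx1) hx0 hn.ne'
    _ = 1 := by rw [sub_add_cancel, one_pow]

lemma abs_Jfun_le_compMulExt (h : ℕ → ℝ) (hh0 : ∀ p : ℕ, p.Prime → 0 ≤ h p)
    (hh1 : ∀ p : ℕ, p.Prime → h p ≤ p) (r s : ℕ) :
    |Jfun h r s| ≤ compMulExt (fun p => if p ∣ s then 1 else h p / p) r := by
  unfold Jfun compMulExt Finsupp.prod
  rw [abs_prod]
  refine prod_le_prod (fun _ _ => abs_nonneg _) fun p hp => ?_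
  have hpp : p.Prime := Nat.prime_of_mem_primeFactors hp
  have hx0 : 0 ≤ h p / p := div_nonneg (hh0 p hpp) p.cast_nonneg
  have hx1 : h p / p ≤ 1 := div_le_one_of_le₀ (hh1 p hpp) p.cast_nonneg
  dsimp only
  split_ifs
  · rw [one_pow]
    exact abs_one_sub_pow_sub_neg_pow_le_one hx0 hx1 _
  · rw [abs_pow, abs_neg, abs_of_nonneg hx0]

section Dk

variable {P : Finset ℕ} (hP : ∀ p ∈ P, p.Prime) {k : ℕ}
include hP

lemma card_filter_dvd_le_of_mem_Dk {d : ℕ} (hd : d ∈ Dk P k) : #(P.filter (· ∣ d)) ≤ k := by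
  obtain ⟨S, hS, rfl⟩ := mem_image.1 hd
  rw [mem_filter, mem_powerset] at hS
  refine (card_le_card fun q hq => ?_).trans hS.2
  rw [mem_filter] at hq
  obtain ⟨a, ha, hqa⟩ := ((hP q hq.1).prime.dvd_finsetProd_iff _).1 hq.2
  rwa [(Nat.prime_dvd_prime_iff_eq (hP q hq.1) (hP a (hS.1 ha))).1 hqa]

lemma mem_Dk_of_squarefree_of_dvd_prod {p : Fin k → ℕ} (hp : ∀ i, p i ∈ P) {s : ℕ}
    (hs : Squarefree s) (hsd : s ∣ ∏ i, p i) : s ∈ Dk P k := by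
  have hsub : s.primeFactors ⊆ univ.image p := fun q hq => by
    obtain ⟨hq, hqs, -⟩ := Nat.mem_primeFactors.1 hq
    obtain ⟨i, -, hqi⟩ := hq.prime.exists_mem_finset_dvd (hqs.trans hsd)
    exact mem_image.2 ⟨i, mem_univ _, ((Nat.prime_dvd_prime_iff_eq hq (hP _ (hp i))).1 hqi).symm⟩
  refine mem_image.2 ⟨s.primeFactors, mem_filter.2 ⟨mem_powerset.2 ?_, ?_⟩,
    Nat.prod_primeFactors_of_squarefree hs⟩
  · exact hsub.trans fun q hq => by obtain ⟨i, -, rfl⟩ := mem_image.1 hq; exact hp i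
  · exact (card_le_card hsub).trans (card_image_le.trans (by simp))

lemma abs_sum_divisors_moebius_sq_mul_le {p : Fin k → ℕ} (hp : ∀ i, p i ∈ P) (f : ℕ → ℝ) :
    |∑ s ∈ (∏ i, p i).divisors, (μ s : ℝ) ^ 2 * f s| ≤ ∑ d ∈ Dk P k, |f d| := by
  calc |∑ s ∈ (∏ i, p i).divisors, (μ s : ℝ) ^ 2 * f s|
      ≤ ∑ s ∈ (∏ i, p i).divisors, |(μ s : ℝ) ^ 2 * f s| := abs_sum_le_sum_abs _ _
    _ = ∑ s ∈ (∏ i, p i).divisors with Squarefree s, |f s| := by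
      rw [sum_filter]
      refine sum_congr rfl fun s _ => ?_
      rw [abs_mul, ← Int.cast_pow, moebius_sq]
      split_ifs <;> simp
    _ ≤ ∑ d ∈ Dk P k, |f d| :=
      sum_le_sum_of_subset_of_nonneg
        (fun s hs => by
          rw [mem_filter, Nat.mem_divisors] at hs
          exact mem_Dk_of_squarefree_of_dvd_prod hP hp hs.2 hs.1.1)
        fun _ _ _ => abs_nonneg _

lemma sum_le_card_add_muP1 (h : ℕ → ℝ) (hh0 : ∀ p : ℕ, p.Prime → 0 ≤ h p) {d : ℕ}
    (hd : d ∈ Dk P k) : ∑ q ∈ P, (if q ∣ d then 1 else h q / q) ≤ k + muP1 h P := by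
  calc ∑ q ∈ P, (if q ∣ d then 1 else h q / q)
      ≤ ∑ q ∈ P, ((if q ∣ d then 1 else 0) + h q / q) := by
        refine sum_le_sum fun q hq => ?_
        have := div_nonneg (hh0 q (hP q hq)) q.cast_nonneg
        split_ifs <;> linarith
    _ = #(P.filter (· ∣ d)) + muP1 h P := by
        rw [sum_add_distrib, ← sum_filter, sum_const, nsmul_one]
        rfl
    _ ≤ k + muP1 h P := by
        gcongr
        exact_mod_cast card_filter_dvd_le_of_mem_Dk hP hd

lemma sum_piFinset_abs_Jfun_le (h : ℕ → ℝ) (hh0 : ∀ p : ℕ, p.Prime → 0 ≤ h p)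
    (hh1 : ∀ p : ℕ, p.Prime → h p ≤ p) {d : ℕ} (hd : d ∈ Dk P k) :
    ∑ p ∈ Fintype.piFinset (fun _ : Fin k => P), |Jfun h (∏ i, p i) d|
      ≤ (k + muP1 h P) ^ k := by
  set c : ℕ → ℝ := fun q => if q ∣ d then 1 else h q / q
  have hc0 : ∀ q ∈ P, 0 ≤ c q := fun q hq => by
    unfold c; split_ifs
    exacts [zero_le_one, div_nonneg (hh0 q (hP q hq)) q.cast_nonneg]
  calc ∑ p ∈ Fintype.piFinset (fun _ : Fin k => P), |Jfun h (∏ i, p i) d|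
      ≤ ∑ p ∈ Fintype.piFinset (fun _ : Fin k => P), ∏ i, c (p i) :=
        sum_le_sum fun p hp => (abs_Jfun_le_compMulExt h hh0 hh1 _ d).trans_eq
          (compMulExt_prod c _ p fun i _ => hP _ (Fintype.mem_piFinset.1 hp i))
    _ = (∑ q ∈ P, c q) ^ k := by rw [← prod_univ_sum, prod_const, card_univ, Fintype.card_fin]
    _ ≤ (k + muP1 h P) ^ k :=
      pow_le_pow_left₀ (sum_nonneg hc0) (sum_le_card_add_muP1 hP h hh0 hd) k

end Dk

theorem error_term_lemma_general (k : ℕ) (G : ℝ) :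
    ∃ C : ℝ, ∀ (S : SieveSetup) (P : Finset ℕ), (∀ p ∈ P, p.Prime) →
      1 ≤ muP1 S.h P →
      ∀ g : Fin k → ℕ → ℝ, (∀ j, StronglyAdditive (g j)) →
      (∀ j, ∀ p : ℕ, p.Prime → 0 ≤ g j p ∧ g j p ≤ G) →
      |∑ p ∈ Fintype.piFinset (fun _ : Fin k => P),
          (∏ i : Fin k, g i (p i)) *
            ∑ s ∈ (∏ i : Fin k, p i).divisors,
              (ArithmeticFunction.moebius s : ℝ) ^ 2 *
                Jfun S.h (∏ i : Fin k, p i) s * S.E s|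
      ≤ C * muP1 S.h P ^ k * ∑ d ∈ Dk P k, |S.E d| := by
  refine ⟨|G| ^ k * (k + 1) ^ k, fun S P hP hμ g _ hg => ?_⟩
  have hh0 : ∀ p : ℕ, p.Prime → 0 ≤ S.h p := fun p hp => S.h_nonneg p hp.pos
  have hh1 : ∀ p : ℕ, p.Prime → S.h p ≤ p := fun p hp => S.h_le p hp.pos
  set T := Fintype.piFinset fun _ : Fin k => P
  have hg_le : ∀ p ∈ T, |∏ i, g i (p i)| ≤ |G| ^ k := fun p hp => by
    rw [abs_prod]
    refine (prod_le_prod (fun _ _ => abs_nonneg _) fun i _ => ?_).trans_eq (Fin.prod_const k |G|)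
    obtain ⟨h0, hG⟩ := hg i (p i) (hP _ (Fintype.mem_piFinset.1 hp i))
    exact (abs_of_nonneg h0).trans_le (hG.trans (le_abs_self G))
  calc _ ≤ ∑ p ∈ T, |G| ^ k * ∑ d ∈ Dk P k, |Jfun S.h (∏ i, p i) d * S.E d| := by
        refine (abs_sum_le_sum_abs _ _).trans (sum_le_sum fun p hp => ?_)
        simp_rw [abs_mul _ (∑ s ∈ _, _), mul_assoc]
        exact mul_le_mul (hg_le p hp) (abs_sum_divisors_moebius_sq_mul_le hP
          (Fintype.mem_piFinset.1 hp) _) (abs_nonneg _) (by positivity)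
    _ = |G| ^ k * ∑ d ∈ Dk P k, |S.E d| * ∑ p ∈ T, |Jfun S.h (∏ i, p i) d| := by
        simp_rw [← mul_sum, abs_mul, mul_sum]
        rw [sum_comm]
        simp_rw [mul_comm]
    _ ≤ |G| ^ k * ∑ d ∈ Dk P k, |S.E d| * ((k + 1) * muP1 S.h P) ^ k := by
        gcongr with d hd
        refine (sum_piFinset_abs_Jfun_le hP S.h hh0 hh1 hd).trans ?_
        gcongr
        nlinarith
    _ = |G| ^ k * (k + 1) ^ k * muP1 S.h P ^ k * ∑ d ∈ Dk P k, |S.E d| := by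
        rw [← sum_mul, mul_pow]
        ring

/-- **Lemma 5.5**: the accumulated error terms satisfy
`∑_{p₁,…,p_k ∈ P} g₁(p₁)⋯g_k(p_k) ∑_{s ∣ p₁⋯p_k} μ²(s) J(p₁⋯p_k, s) E_s
  ≪ μ^P(1)^k ∑_{d ∈ D_k(P)} |E_d|`. -/
theorem error_term_lemma (k : ℕ) (hk : 0 < k) (G : ℝ) (hG : 0 < G) :
    ∃ C : ℝ, ∀ (S : SieveSetup) (P : Finset ℕ), (∀ p ∈ P, p.Prime) →
      1 ≤ muP1 S.h P →
      ∀ g : Fin k → ℕ → ℝ, (∀ j, StronglyAdditive (g j)) →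
      (∀ j, ∀ p : ℕ, p.Prime → 0 ≤ g j p ∧ g j p ≤ G) →
      |∑ p ∈ Fintype.piFinset (fun _ : Fin k => P),
          (∏ i : Fin k, g i (p i)) *
            ∑ s ∈ (∏ i : Fin k, p i).divisors,
              (ArithmeticFunction.moebius s : ℝ) ^ 2 *
                Jfun S.h (∏ i : Fin k, p i) s * S.E s|
      ≤ C * muP1 S.h P ^ k * ∑ d ∈ Dk P k, |S.E d| :=
  error_term_lemma_general k G
end
end
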